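/- arXiv:2604.12124 — 2 statements merged into one kernel-verified Lean document; each statement's English description precedes it below -/
import Mathlib

section
/- Let (X, μ) be a measure space, s, s' : X → ℝ measurable, λ : X → [0,∞) measurable, and b > 0. Then ∫_B λ dμ ≤ ∫_{{|s| ≤ 2b}} λ dμ + (1/b) ∫_X |s − s'| λ dμ, where B is the union of the symmetric differences ({s ≥ b} Δ {s' ≥ b}) ∪ ({s ≤ −b} Δ {s' ≤ −b}). -/
open MeasureTheory
open scoped ENNReal

/-- Decisive-set disagreement mass bound: the `λ`-mass (w.r.t. `μ`) of the union of
symmetric differences of level sets is bounded by the ambiguous-band mass plus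
`(1/b)` times the weighted `L¹` distance between the scores. -/
theorem stmt9 {X : Type*} [MeasurableSpace X] (μ : Measure X)
    (s s' : X → ℝ) (lam : X → ℝ≥0∞) (b : ℝ) (hb : 0 < b)
    (hs : Measurable s) (hs' : Measurable s') (hlam : Measurable lam) :
    ∫⁻ x in (symmDiff {x | b ≤ s x} {x | b ≤ s' x}) ∪
            (symmDiff {x | s x ≤ -b} {x | s' x ≤ -b}), lam x ∂μ
      ≤ (∫⁻ x in {x | |s x| ≤ 2 * b}, lam x ∂μ)
        + ENNReal.ofReal (1 / b) * ∫⁻ x, ENNReal.ofReal |s x - s' x| * lam x ∂μ := by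
  set A : Set X := {x | |s x| ≤ 2 * b}
  set C : Set X := {x | b ≤ |s x - s' x|}
  have hCmeas : MeasurableSet C := measurableSet_le measurable_const ((hs.sub hs').abs)
  have hsub : (symmDiff {x | b ≤ s x} {x | b ≤ s' x}) ∪
      (symmDiff {x | s x ≤ -b} {x | s' x ≤ -b}) ⊆ A ∪ C := by
    intro x hx
    by_cases hA : |s x| ≤ 2 * b
    · exact Or.inl hA
    · refine Or.inr ?_
      push_neg at hA
      show b ≤ |s x - s' x|
      rcases hx with hx | hx <;>
        rcases hx with ⟨h1, h2⟩ | ⟨h1, h2⟩ <;>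
        simp only [Set.mem_setOf_eq, Set.mem_diff, not_le] at h1 h2 <;>
        rcases abs_cases (s x) with ⟨he, hp⟩ | ⟨he, hp⟩ <;>
        rcases abs_cases (s x - s' x) with ⟨he2, hp2⟩ | ⟨he2, hp2⟩ <;>
        linarith
  calc ∫⁻ x in (symmDiff {x | b ≤ s x} {x | b ≤ s' x}) ∪
            (symmDiff {x | s x ≤ -b} {x | s' x ≤ -b}), lam x ∂μ
      ≤ ∫⁻ x in A ∪ C, lam x ∂μ := lintegral_mono_set hsub
    _ ≤ (∫⁻ x in A, lam x ∂μ) + ∫⁻ x in C, lam x ∂μ := lintegral_union_le _ _ _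
    _ ≤ (∫⁻ x in A, lam x ∂μ)
        + ENNReal.ofReal (1 / b) * ∫⁻ x, ENNReal.ofReal |s x - s' x| * lam x ∂μ := by
        gcongr
        have hstep : ∫⁻ x in C, lam x ∂μ
            ≤ ∫⁻ x in C, ENNReal.ofReal (1 / b) * (ENNReal.ofReal |s x - s' x| * lam x) ∂μ := by
          refine setLIntegral_mono' hCmeas fun x hx => ?_
          have hx' : (b : ℝ) ≤ |s x - s' x| := hx
          have h1 : (1 : ℝ≥0∞) ≤ ENNReal.ofReal (1 / b) * ENNReal.ofReal |s x - s' x| := by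
            rw [← ENNReal.ofReal_mul (by positivity), ← ENNReal.ofReal_one]
            apply ENNReal.ofReal_le_ofReal
            rw [div_mul_eq_mul_div, one_mul, le_div_iff₀ hb, one_mul]
            exact hx'
          calc lam x = 1 * lam x := (one_mul _).symm
            _ ≤ ENNReal.ofReal (1 / b) * ENNReal.ofReal |s x - s' x| * lam x :=
                mul_le_mul_left h1 _
            _ = ENNReal.ofReal (1 / b) * (ENNReal.ofReal |s x - s' x| * lam x) := mul_assoc _ _ _
        refine hstep.trans ?_
        rw [← lintegral_const_mul _ (show Measurable (fun x => ENNReal.ofReal |s x - s' x| * lam x) from ((hs.sub hs').abs.ennreal_ofReal).mul hlam)]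
        exact lintegral_mono' Measure.restrict_le_self le_rfl
end

section
/- Let m, C > 0 and suppose real numbers x ≥ 0, g₁, g₂ ≥ 0 satisfy m·x² ≤ (g₁ + g₂)·x. Then x ≤ (g₁ + g₂)/m. More specifically, if θ̂, θ* ∈ K ⊆ ℝ^p with K convex, f, f* : K → ℝ differentiable, f* is m-strongly concave on K, (θ − θ̂)ᵀ∇f(θ̂) ≤ 0 for all θ ∈ K (first-order optimality of θ̂ for f on K), then m‖θ̂ − θ*‖ ≤ ‖∇f(θ̂) − ∇f*(θ̂)‖ + ‖∇f*(θ*)‖. -/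
open scoped RealInnerProductSpace

/-- M-step parameter bound. Scalar form: `m x² ≤ (g₁+g₂) x` with `x ≥ 0` gives
`x ≤ (g₁+g₂)/m`. Vector form: if `θ̂` satisfies the first-order optimality
condition for `f` on the convex set `K` and `f*` is `m`-strongly concave on `K`
(gradient monotonicity), then
`m ‖θ̂ - θ*‖ ≤ ‖∇f(θ̂) - ∇f*(θ̂)‖ + ‖∇f*(θ*)‖`. -/
theorem stmt12 {p : ℕ} (K : Set (EuclideanSpace ℝ (Fin p))) (hK : Convex ℝ K)
    (θhat θs : EuclideanSpace ℝ (Fin p)) (hθhat : θhat ∈ K) (hθs : θs ∈ K)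
    (m : ℝ) (hm : 0 < m)
    (gf gfs : EuclideanSpace ℝ (Fin p) → EuclideanSpace ℝ (Fin p))
    (hopt : ∀ θ ∈ K, ⟪θ - θhat, gf θhat⟫ ≤ 0)
    (hsc : ∀ θ ∈ K, ∀ θ' ∈ K, ⟪gfs θ' - gfs θ, θ' - θ⟫ ≤ -m * ‖θ' - θ‖ ^ 2) :
    (∀ x g₁ g₂ : ℝ, 0 ≤ x → 0 ≤ g₁ → 0 ≤ g₂ →
        m * x ^ 2 ≤ (g₁ + g₂) * x → x ≤ (g₁ + g₂) / m) ∧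
    m * ‖θhat - θs‖ ≤ ‖gf θhat - gfs θhat‖ + ‖gfs θs‖ := by
  have hscalar : ∀ x g₁ g₂ : ℝ, 0 ≤ x → 0 ≤ g₁ → 0 ≤ g₂ →
      m * x ^ 2 ≤ (g₁ + g₂) * x → x ≤ (g₁ + g₂) / m := by
    intro x g₁ g₂ hx hg₁ hg₂ h
    rcases eq_or_lt_of_le hx with h0 | h0
    · rw [← h0]; positivity
    · rw [le_div_iff₀ hm]
      have := mul_le_mul_of_nonneg_right
        ((mul_le_mul_iff_of_pos_right h0).mp (by nlinarith : m * x * x ≤ (g₁ + g₂) * x))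
        (le_of_lt h0)
      nlinarith
  refine ⟨hscalar, ?_⟩
  set d := θhat - θs with hd
  have h1 : ⟪gfs θhat - gfs θs, d⟫ ≤ -m * ‖d‖ ^ 2 := hsc θs hθs θhat hθhat
  have h2 : ⟪θs - θhat, gf θhat⟫ ≤ 0 := hopt θs hθs
  have h3 : m * ‖d‖ ^ 2 ≤ ⟪gf θhat - gfs θhat, d⟫ + ⟪gfs θs, d⟫ := by
    have e1 : ⟪gfs θhat - gfs θs, d⟫ = ⟪gfs θhat, d⟫ - ⟪gfs θs, d⟫ :=
      inner_sub_left _ _ _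
    have e2 : ⟪gf θhat - gfs θhat, d⟫ = ⟪gf θhat, d⟫ - ⟪gfs θhat, d⟫ :=
      inner_sub_left _ _ _
    have e3 : ⟪θs - θhat, gf θhat⟫ = -⟪gf θhat, d⟫ := by
      rw [real_inner_comm, hd, ← inner_neg_right, neg_sub]
    nlinarith
  have h4 : ⟪gf θhat - gfs θhat, d⟫ ≤ ‖gf θhat - gfs θhat‖ * ‖d‖ :=
    real_inner_le_norm _ _
  have h5 : ⟪gfs θs, d⟫ ≤ ‖gfs θs‖ * ‖d‖ := real_inner_le_norm _ _
  have h6 : m * ‖d‖ ^ 2 ≤ (‖gf θhat - gfs θhat‖ + ‖gfs θs‖) * ‖d‖ := by nlinarith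
  have := hscalar ‖d‖ _ _ (norm_nonneg _) (norm_nonneg _) (norm_nonneg _) h6
  calc m * ‖d‖ ≤ m * ((‖gf θhat - gfs θhat‖ + ‖gfs θs‖) / m) := by
        exact mul_le_mul_of_nonneg_left this hm.le
    _ = _ := by field_simp
end
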